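/- arXiv:1103.1055 — 3 statements merged into one kernel-verified Lean document; each statement's English description precedes it below -/
import Mathlib

section
/- Let 0 < δ < 1. There exist constants R₁, R₂ > 0 (depending only on γ and δ) such that for all y ∈ ℝ⁴ with |y⁰| ≤ δ|y⃗| and all x ∈ ℝ⁴ with Euclidean distance |x − y| ≤ γ, and all R ≥ R₁: |θ(x² + R²) − θ(y² + R²)| ≤ θ(−y² − (R − R₁)²)·θ(y² + (R + R₂)²), where θ is the Heaviside step function (θ(t) = 1 for t ≥ 0, θ(t) = 0 for t < 0), and x², y² are Minkowski squares. -/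
noncomputable section
open MeasureTheory Real Filter Topology

/-- Minkowski inner product on `ℝ⁴` with signature `(+,-,-,-)`. -/
def mdot (x y : Fin 4 → ℝ) : ℝ := x 0 * y 0 - x 1 * y 1 - x 2 * y 2 - x 3 * y 3

/-- Minkowski square. -/
def mSq (x : Fin 4 → ℝ) : ℝ := mdot x x

/-- Lowered-index components: `x_0 = x⁰`, `x_i = -xⁱ`. -/
def low (a : Fin 4) (x : Fin 4 → ℝ) : ℝ := if a = 0 then x 0 else -(x a)

/-- Euclidean norm of the spatial part. -/
def spN (x : Fin 4 → ℝ) : ℝ := Real.sqrt ((x 1)^2 + (x 2)^2 + (x 3)^2)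

/-- Euclidean norm of the full 4-vector. -/
def eN (x : Fin 4 → ℝ) : ℝ := Real.sqrt ((x 0)^2 + (x 1)^2 + (x 2)^2 + (x 3)^2)

/-- Standard basis vector of `ℝ⁴`. -/
def e4 (a : Fin 4) : Fin 4 → ℝ := Pi.single a 1

/-- The future null vector `l = (1, l⃗)` associated with a direction `l⃗ ∈ S²`. -/
def ell (n : EuclideanSpace ℝ (Fin 3)) : Fin 4 → ℝ := ![1, n 0, n 1, n 2]

/-- The unit 2-sphere of spatial directions. -/
def S2 : Set (EuclideanSpace ℝ (Fin 3)) := Metric.sphere 0 1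

/-- Heaviside step function (`θ(t) = 1` for `t ≥ 0`, `θ(t) = 0` for `t < 0`). -/
def theta (t : ℝ) : ℝ := if 0 ≤ t then 1 else 0

set_option maxHeartbeats 1000000

/-- for `0 < δ < 1` and `γ > 0` there are constants `R₁, R₂ > 0` such that
for every `y ∈ R_δ`, every `x` with Euclidean distance `|x - y| ≤ γ`, and every `R ≥ R₁`,
`|θ(x²+R²) - θ(y²+R²)| ≤ θ(-y²-(R-R₁)²)·θ(y²+(R+R₂)²)`. -/
theorem stmt1 (γ δ : ℝ) (hγ : 0 < γ) (hδ0 : 0 < δ) (hδ1 : δ < 1) :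
    ∃ R₁ > (0:ℝ), ∃ R₂ > (0:ℝ), ∀ (y x : Fin 4 → ℝ) (R : ℝ),
      |y 0| ≤ δ * spN y → eN (x - y) ≤ γ → R₁ ≤ R →
      |theta (mSq x + R^2) - theta (mSq y + R^2)| ≤
        theta (-(mSq y) - (R - R₁)^2) * theta (mSq y + (R + R₂)^2) := by
  have hδ2 : (0:ℝ) < 1 - δ^2 := by nlinarith
  set κ := Real.sqrt ((1+δ^2)/(1-δ^2)) with hκdef
  have hκsq : κ^2 = (1+δ^2)/(1-δ^2) := Real.sq_sqrt (by positivity)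
  have hκ1 : (1:ℝ) ≤ κ := by
    rw [show (1:ℝ) = Real.sqrt 1 by simp, hκdef]
    apply Real.sqrt_le_sqrt
    rw [le_div_iff₀ hδ2]; nlinarith
  have hκ0 : (0:ℝ) < κ := lt_of_lt_of_le one_pos hκ1
  set t := Real.sqrt (γ^2*(κ^2+1)) with htdef
  have htsq : t^2 = γ^2*(κ^2+1) := Real.sq_sqrt (by positivity)
  have ht0 : (0:ℝ) ≤ t := Real.sqrt_nonneg _
  have hκ2 : κ^2 * (1-δ^2) = 1+δ^2 := by rw [hκsq]; field_simp
  refine ⟨γ*κ, by positivity, γ*κ + t, by positivity, ?_⟩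
  intro y x R hy hx hR
  have h01 : ∀ z : ℝ, 0 ≤ theta z := by
    intro z; unfold theta; split <;> norm_num
  -- basic quantities
  have hUnn : (0:ℝ) ≤ (x 0 - y 0)^2 + (x 1 - y 1)^2 + (x 2 - y 2)^2 + (x 3 - y 3)^2 := by positivity
  have hU : (x 0 - y 0)^2 + (x 1 - y 1)^2 + (x 2 - y 2)^2 + (x 3 - y 3)^2 ≤ γ^2 := by
    have h1 : eN (x - y) = Real.sqrt ((x 0 - y 0)^2 + (x 1 - y 1)^2 + (x 2 - y 2)^2 + (x 3 - y 3)^2) := by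
      simp [eN]
    rw [h1] at hx
    calc (x 0 - y 0)^2 + (x 1 - y 1)^2 + (x 2 - y 2)^2 + (x 3 - y 3)^2
        = (Real.sqrt ((x 0 - y 0)^2 + (x 1 - y 1)^2 + (x 2 - y 2)^2 + (x 3 - y 3)^2))^2 :=
          (Real.sq_sqrt hUnn).symm
      _ ≤ γ^2 := pow_le_pow_left₀ (Real.sqrt_nonneg _) hx 2
  have hPnn : (0:ℝ) ≤ (y 1)^2 + (y 2)^2 + (y 3)^2 := by positivity
  have hy2 : (y 0)^2 ≤ δ^2 * ((y 1)^2 + (y 2)^2 + (y 3)^2) := by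
    have h2 : |y 0|^2 ≤ (δ * spN y)^2 := pow_le_pow_left₀ (abs_nonneg _) hy 2
    rw [sq_abs, mul_pow, spN, Real.sq_sqrt hPnn] at h2
    exact h2
  have hmy : mSq y = (y 0)^2 - ((y 1)^2 + (y 2)^2 + (y 3)^2) := by
    simp [mSq, mdot]; ring
  have hmyle : mSq y ≤ 0 := by nlinarith
  set s := Real.sqrt (-(mSq y)) with hsdef
  have hssq : s^2 = -(mSq y) := Real.sq_sqrt (by linarith)
  have hs0 : (0:ℝ) ≤ s := Real.sqrt_nonneg _
  -- Euclidean norm of y bounded by κ s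
  have hE : (y 0)^2 + (y 1)^2 + (y 2)^2 + (y 3)^2 ≤ κ^2 * s^2 := by
    have h3 : κ^2 * s^2 = κ^2 * (((y 1)^2 + (y 2)^2 + (y 3)^2) - (y 0)^2) := by
      rw [hssq, hmy]; ring
    nlinarith [sq_nonneg (y 0), mul_le_mul_of_nonneg_left hy2 (le_of_lt (by positivity : (0:ℝ) < κ^2))]
  -- Cauchy-Schwarz for Minkowski cross term
  set d := y 0 * (x 0 - y 0) - y 1 * (x 1 - y 1) - y 2 * (x 2 - y 2) - y 3 * (x 3 - y 3) with hddef
  have hcs : d^2 ≤ ((y 0)^2 + (y 1)^2 + (y 2)^2 + (y 3)^2) * ((x 0 - y 0)^2 + (x 1 - y 1)^2 + (x 2 - y 2)^2 + (x 3 - y 3)^2) := by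
    have hid : ((y 0)^2 + (y 1)^2 + (y 2)^2 + (y 3)^2) * ((x 0 - y 0)^2 + (x 1 - y 1)^2 + (x 2 - y 2)^2 + (x 3 - y 3)^2) - d^2 =
        (y 0 * (x 1 - y 1) + y 1 * (x 0 - y 0))^2 + (y 0 * (x 2 - y 2) + y 2 * (x 0 - y 0))^2 +
        (y 0 * (x 3 - y 3) + y 3 * (x 0 - y 0))^2 + (y 1 * (x 2 - y 2) - y 2 * (x 1 - y 1))^2 +
        (y 1 * (x 3 - y 3) - y 3 * (x 1 - y 1))^2 + (y 2 * (x 3 - y 3) - y 3 * (x 2 - y 2))^2 := by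
      rw [hddef]; ring
    linarith [sq_nonneg (y 0 * (x 1 - y 1) + y 1 * (x 0 - y 0)),
      sq_nonneg (y 0 * (x 2 - y 2) + y 2 * (x 0 - y 0)),
      sq_nonneg (y 0 * (x 3 - y 3) + y 3 * (x 0 - y 0)),
      sq_nonneg (y 1 * (x 2 - y 2) - y 2 * (x 1 - y 1)),
      sq_nonneg (y 1 * (x 3 - y 3) - y 3 * (x 1 - y 1)),
      sq_nonneg (y 2 * (x 3 - y 3) - y 3 * (x 2 - y 2))]
  have hd2 : d^2 ≤ (κ*s*γ)^2 := by
    calc d^2 ≤ ((y 0)^2 + (y 1)^2 + (y 2)^2 + (y 3)^2) * ((x 0 - y 0)^2 + (x 1 - y 1)^2 + (x 2 - y 2)^2 + (x 3 - y 3)^2) := hcs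
      _ ≤ (κ^2 * s^2) * γ^2 := mul_le_mul hE hU hUnn (by positivity)
      _ = (κ*s*γ)^2 := by ring
  have hM : (0:ℝ) ≤ κ*s*γ := by positivity
  obtain ⟨hdge, hdle⟩ : -(κ*s*γ) ≤ d ∧ d ≤ κ*s*γ := abs_le_of_sq_le_sq' hd2 hM
  -- bound on mSq of difference
  have hmub : -(γ^2) ≤ (x 0 - y 0)^2 - (x 1 - y 1)^2 - (x 2 - y 2)^2 - (x 3 - y 3)^2 ∧
      (x 0 - y 0)^2 - (x 1 - y 1)^2 - (x 2 - y 2)^2 - (x 3 - y 3)^2 ≤ γ^2 := by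
    constructor <;> linarith [hU, sq_nonneg (x 0 - y 0), sq_nonneg (x 1 - y 1), sq_nonneg (x 2 - y 2), sq_nonneg (x 3 - y 3)]
  have hmx : mSq x = mSq y + 2*d + ((x 0 - y 0)^2 - (x 1 - y 1)^2 - (x 2 - y 2)^2 - (x 3 - y 3)^2) := by
    simp only [mSq, mdot, hddef]; ring
  have hub : mSq x - mSq y ≤ 2*(κ*s*γ) + γ^2 := by linarith [hmub.2, hdle]
  have hlb : -(2*(κ*s*γ) + γ^2) ≤ mSq x - mSq y := by linarith [hmub.1, hdge]
  clear_value d s t κ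
  clear hcs hd2 hU hUnn hE hy2 hy hx hPnn hmy hκdef hsdef htdef hddef hκsq hκ2 hδ2 hδ0 hδ1 hmub hmx hdle hdge hM
  have hγκ : (0:ℝ) < γ*κ := mul_pos hγ hκ0
  have hR0 : (0:ℝ) ≤ R := le_trans (le_of_lt hγκ) hR
  generalize hP : mSq x = P at hub hlb ⊢
  generalize hQ : mSq y = Q at hub hlb hssq hmyle ⊢
  clear hP hQ d x y
  by_cases hX : 0 ≤ P + R^2 <;> by_cases hY : 0 ≤ Q + R^2
  · have hLHS : theta (P + R^2) - theta (Q + R^2) = 0 := by simp [theta, hX, hY]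
    rw [hLHS, abs_zero]
    exact mul_nonneg (h01 _) (h01 _)
  · -- x side ≥ 0, y side < 0
    push_neg at hY
    have hB : s^2 ≤ R^2 + 2*(κ*s*γ) + γ^2 := by linarith
    have h1 : 0 ≤ -Q - (R - γ*κ)^2 := by
      nlinarith [hY, mul_le_mul_of_nonneg_left hR (le_of_lt hγκ)]
    have key2 : (s - γ*κ)^2 ≤ (R + t)^2 := by
      nlinarith [hB, htsq, mul_nonneg hR0 ht0]
    have hsle : s - γ*κ ≤ R + t := by
      nlinarith [key2, add_nonneg hR0 ht0]
    have hsM : s ≤ R + (γ*κ + t) := by linarith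
    have hM0 : (0:ℝ) ≤ R + (γ*κ + t) := by linarith
    have hss : s * s ≤ (R + (γ*κ + t)) * (R + (γ*κ + t)) := mul_le_mul hsM hsM hs0 hM0
    have h2 : 0 ≤ Q + (R + (γ*κ + t))^2 := by nlinarith [hss, hssq]
    have hLHS : |theta (P + R^2) - theta (Q + R^2)| = 1 := by
      simp [theta, hX, not_le.mpr hY]
    rw [hLHS, theta, theta, if_pos h1, if_pos h2]; norm_num
  · -- x side < 0, y side ≥ 0
    push_neg at hX
    have hA : R^2 - s^2 ≤ 2*(κ*s*γ) + γ^2 := by linarith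
    have hpos : (0:ℝ) < s + γ*κ := by linarith
    have key : R^2 ≤ (s + γ*κ)^2 := by
      nlinarith [hA, mul_nonneg (mul_nonneg (by linarith : (0:ℝ) ≤ κ - 1) (by linarith : (0:ℝ) ≤ κ + 1)) (sq_nonneg γ)]
    have hRle : R ≤ s + γ*κ := by nlinarith [key, hpos]
    have h1 : 0 ≤ -Q - (R - γ*κ)^2 := by
      have h4 : (0:ℝ) ≤ R - γ*κ := by linarith
      have h5 : R - γ*κ ≤ s := by linarith
      nlinarith [mul_le_mul h5 h5 h4 hs0, hssq]
    have h2 : 0 ≤ Q + (R + (γ*κ + t))^2 := by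
      nlinarith [hY, mul_nonneg hR0 (by linarith : (0:ℝ) ≤ γ*κ + t), sq_nonneg (γ*κ + t)]
    have hLHS : |theta (P + R^2) - theta (Q + R^2)| = 1 := by
      simp [theta, not_le.mpr hX, hY]
    rw [hLHS, theta, theta, if_pos h1, if_pos h2]; norm_num
  · have hLHS : theta (P + R^2) - theta (Q + R^2) = 0 := by simp [theta, hX, hY]
    rw [hLHS, abs_zero]
    exact mul_nonneg (h01 _) (h01 _)
end
end

section
/- Let f : ℝ⁴ → ℝ be continuously differentiable and suppose f(v)·(v⁰)³ → 0 as v⁰ → ∞ uniformly on the hyperboloid H₊ = {v : v² = 1, v⁰ > 0}, with enough decay for all integrals to converge. Then for each pair of indices a, b: ∫_{H₊} (δ_b f − 3 v_b f)(v) dμ(v) = 0, where δ_b = v^a(v_a ∂/∂v^b − v_b ∂/∂v^a) is the intrinsic derivative on H₊ and dμ(v) = 2θ(v⁰)δ(v²−1)d⁴v is the Lorentz-invariant measure. -/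
noncomputable section
open MeasureTheory Real Filter Topology

/-- Parametrization of the hyperboloid `H₊ = {v² = 1, v⁰ > 0}` by the spatial momentum. -/
def liftH (p : Fin 3 → ℝ) : Fin 4 → ℝ :=
  ![Real.sqrt (1 + (p 0)^2 + (p 1)^2 + (p 2)^2), p 0, p 1, p 2]

/-- The intrinsic derivative `δ_b = v^a(v_a ∂/∂v^b − v_b ∂/∂v^a)` on `H₊`,
written via an ambient extension of `f`. -/
def dHp (b : Fin 4) (f : (Fin 4 → ℝ) → ℝ) (v : Fin 4 → ℝ) : ℝ :=
  mSq v * fderiv ℝ f v (e4 b) - low b v * fderiv ℝ f v v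

/-!
In the chart `p ↦ liftH p = (√(1 + |p|²), p)` of `H₊`, the integrand is the Euclidean divergence
`∑ᵢ ∂ᵢ Fᵢ` of the field `Fᵢ = (δ_b^{i+1} - v_b pᵢ) f(v) / v⁰`, the spatial part of the tangential
projection of `e_b` weighted by `f / v⁰`. The hypothesis `|f| (v⁰)³ → 0` makes `|p|² |Fᵢ| → 0`,
so the flux of `F` through the faces of the cube `[-r, r]³` tends to zero, while by the divergence
theorem the flux equals the integral of the integrand over the cube, which tends to the full
integral.
-/

open Set Metric Bornology

section Divergence

variable {E : Type*} [NormedAddCommGroup E] [NormedSpace ℝ E] {n : ℕ}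

lemma closedBall_zero_eq_Icc {ι : Type*} [Fintype ι] {r : ℝ} (hr : 0 ≤ r) :
    closedBall (0 : ι → ℝ) r = Icc (fun _ => -r) (fun _ => r) := by
  rw [closedBall_pi _ hr, ← pi_univ_Icc]
  simp [Real.closedBall_eq_Icc]

lemma norm_setIntegral_face_le {F : (Fin (n + 1) → ℝ) → E} {r δ : ℝ} (hr : 0 < r)
    (hF : ∀ p, r ≤ ‖p‖ → ‖p‖ ^ n * ‖F p‖ ≤ δ) (i : Fin (n + 1)) {c : ℝ} (hc : |c| = r) :
    ‖∫ x in Icc (fun _ => -r) (fun _ => r), F (i.insertNth c x)‖ ≤ 2 ^ n * δ := by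
  have hbound : ∀ x ∈ Icc (fun _ : Fin n => -r) (fun _ => r),
      ‖F (i.insertNth c x)‖ ≤ δ / r ^ n := by
    intro x _
    have hr_le : r ≤ ‖(i.insertNth c x : Fin (n + 1) → ℝ)‖ := by
      simpa [hc] using norm_le_pi_norm (i.insertNth c x : Fin (n + 1) → ℝ) i
    rw [le_div_iff₀ (by positivity), mul_comm]
    exact (mul_le_mul_of_nonneg_right (pow_le_pow_left₀ hr.le hr_le n) (norm_nonneg _)).trans
      (hF _ hr_le)
  have hvol : volume.real (Icc (fun _ : Fin n => -r) (fun _ => r)) = (2 * r) ^ n := by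
    rw [measureReal_def, Real.volume_Icc_pi_toReal fun _ => by linarith]
    simp [two_mul]
  calc _ ≤ δ / r ^ n * volume.real (Icc (fun _ : Fin n => -r) (fun _ => r)) :=
        norm_setIntegral_le_of_norm_le_const isCompact_Icc.measure_lt_top hbound
    _ = 2 ^ n * δ := by rw [hvol]; field_simp; ring

lemma norm_setIntegral_divergence_closedBall_le [CompleteSpace E]
    {F : Fin (n + 1) → (Fin (n + 1) → ℝ) → E}
    {F' : Fin (n + 1) → (Fin (n + 1) → ℝ) → (Fin (n + 1) → ℝ) →L[ℝ] E}
    (hF' : ∀ i p, HasFDerivAt (F i) (F' i p) p)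
    (hint : Integrable fun p => ∑ i, F' i p (Pi.single i 1)) {r δ : ℝ} (hr : 0 < r)
    (hF : ∀ p, r ≤ ‖p‖ → ∀ i, ‖p‖ ^ n * ‖F i p‖ ≤ δ) :
    ‖∫ p in closedBall 0 r, ∑ i, F' i p (Pi.single i 1)‖ ≤ (n + 1) * (2 * (2 ^ n * δ)) := by
  rw [closedBall_zero_eq_Icc hr.le, integral_divergence_of_hasFDerivAt_off_countable'
    (fun _ => -r) (fun _ => r) (fun _ => by linarith) F F' ∅ countable_empty
    (fun i => (continuous_iff_continuousAt.2 fun p => (hF' i p).continuousAt).continuousOn)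
    (fun p _ i => hF' i p) hint.integrableOn]
  have hface := fun i c hc => norm_setIntegral_face_le hr (fun p hp => hF p hp i) i (c := c) hc
  calc _ ≤ ∑ i : Fin (n + 1), 2 * (2 ^ n * δ) := by
        refine (norm_sum_le _ _).trans (Finset.sum_le_sum fun i _ => ?_)
        refine (norm_sub_le _ _).trans ?_
        rw [two_mul]
        exact add_le_add (hface i r (abs_of_pos hr)) (hface i (-r) (by simp [abs_of_pos hr]))
    _ = _ := by simp

theorem integral_divergence_eq_zero_of_decay [CompleteSpace E]
    {F : Fin (n + 1) → (Fin (n + 1) → ℝ) → E}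
    {F' : Fin (n + 1) → (Fin (n + 1) → ℝ) → (Fin (n + 1) → ℝ) →L[ℝ] E}
    (hF' : ∀ i p, HasFDerivAt (F i) (F' i p) p)
    (hint : Integrable fun p => ∑ i, F' i p (Pi.single i 1))
    (hdecay : ∀ i, Tendsto (fun p => ‖p‖ ^ n * ‖F i p‖) (cobounded _) (𝓝 0)) :
    ∫ p, ∑ i, F' i p (Pi.single i 1) = 0 := by
  have hlim :=
    (aecover_closedBall (x := 0) tendsto_id).integral_tendsto_of_countably_generated hint
  refine norm_le_zero_iff.1 (le_of_forall_pos_le_add fun ε hε => ?_)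
  set δ := ε / (2 * (n + 1) * 2 ^ n)
  have hsmall : ∀ᶠ p in cobounded _, ∀ i, ‖p‖ ^ n * ‖F i p‖ ≤ δ :=
    eventually_all.2 fun i => (hdecay i).eventually (ge_mem_nhds (by positivity))
  obtain ⟨M, -, hM⟩ := hasBasis_cobounded_norm.eventually_iff.1 hsmall
  have hcube : ∀ᶠ r in atTop, ‖∫ p in closedBall 0 r, ∑ i, F' i p (Pi.single i 1)‖ ≤ ε := by
    filter_upwards [eventually_ge_atTop M, eventually_gt_atTop 0] with r hrM hr
    refine (norm_setIntegral_divergence_closedBall_le hF' hint hr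
      fun p hp => hM (hrM.trans hp)).trans (le_of_eq ?_)
    simp only [δ]
    field_simp
  simpa using le_of_tendsto hlim.norm hcube

end Divergence

section Chart

variable (p : Fin 3 → ℝ)

lemma liftH_one : liftH p 1 = p 0 := rfl

lemma liftH_two : liftH p 2 = p 1 := rfl

lemma liftH_three : liftH p 3 = p 2 := rfl

lemma liftH_zero_sq : liftH p 0 ^ 2 = 1 + p 0 ^ 2 + p 1 ^ 2 + p 2 ^ 2 :=
  Real.sq_sqrt (by positivity)

lemma liftH_zero_pos : 0 < liftH p 0 := Real.sqrt_pos.2 (by positivity)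

lemma mSq_liftH : mSq (liftH p) = 1 := by
  simp only [mSq, mdot, liftH_one, liftH_two, liftH_three]
  linear_combination liftH_zero_sq p

lemma sq_norm_add_one_le : ‖p‖ ^ 2 + 1 ≤ liftH p 0 ^ 2 := by
  have h : ‖p‖ ≤ √(p 0 ^ 2 + p 1 ^ 2 + p 2 ^ 2) :=
    (pi_norm_le_iff_of_nonneg (Real.sqrt_nonneg _)).2 fun i => Real.abs_le_sqrt (by
      fin_cases i <;> simp <;> nlinarith [sq_nonneg (p 0), sq_nonneg (p 1), sq_nonneg (p 2)])
  have h2 := pow_le_pow_left₀ (norm_nonneg p) h 2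
  rw [Real.sq_sqrt (by positivity)] at h2
  linarith [liftH_zero_sq p]

lemma norm_le_liftH_zero : ‖p‖ ≤ liftH p 0 :=
  (abs_le_of_sq_le_sq' (by nlinarith [sq_norm_add_one_le p]) (liftH_zero_pos p).le).2

lemma liftH_eq_cons : liftH p = Fin.cons (liftH p 0) p := by
  ext a
  fin_cases a <;> rfl

def liftHDeriv : (Fin 3 → ℝ) →L[ℝ] (Fin 4 → ℝ) :=
  ContinuousLinearMap.finCons (M := fun _ => ℝ)
    ((liftH p 0)⁻¹ • ∑ j, p j • (ContinuousLinearMap.proj j : (Fin 3 → ℝ) →L[ℝ] ℝ))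
    (ContinuousLinearMap.id ℝ _)

lemma hasFDerivAt_liftH : HasFDerivAt liftH (liftHDeriv p) p := by
  have hsum : HasFDerivAt (fun q : Fin 3 → ℝ => 1 + ∑ j, q j ^ 2)
      (∑ j, (2 * p j) • (ContinuousLinearMap.proj j : (Fin 3 → ℝ) →L[ℝ] ℝ)) p := by
    refine (HasFDerivAt.fun_sum fun j _ => ?_).const_add (1 : ℝ)
    simpa [Function.comp_def, mul_comm] using (hasDerivAt_pow 2 (p j)).comp_hasFDerivAt p
      (ContinuousLinearMap.proj j : (Fin 3 → ℝ) →L[ℝ] ℝ).hasFDerivAt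
  have hsqrt : (fun q : Fin 3 → ℝ => liftH q 0) = fun q => √(1 + ∑ j, q j ^ 2) := by
    ext q
    simp [liftH, Fin.sum_univ_three, add_assoc]
  have h0 : HasFDerivAt (fun q : Fin 3 → ℝ => liftH q 0)
      ((liftH p 0)⁻¹ • ∑ j, p j • (ContinuousLinearMap.proj j : (Fin 3 → ℝ) →L[ℝ] ℝ)) p := by
    rw [hsqrt]
    refine (hsum.sqrt (by positivity)).congr_fderiv ?_
    ext x
    simp only [show √(1 + ∑ j, p j ^ 2) = liftH p 0 from congrFun hsqrt.symm p]
    simp [Finset.mul_sum]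
    exact Finset.sum_congr rfl fun i _ => by ring
  rw [show liftH = fun q => Fin.cons (liftH q 0) q from funext liftH_eq_cons]
  exact h0.finCons (hasFDerivAt_id p)

def liftHPartial (i : Fin 3) : Fin 4 → ℝ := (p i / liftH p 0) • e4 0 + e4 i.succ

lemma liftHDeriv_single (i : Fin 3) : liftHDeriv p (Pi.single i 1) = liftHPartial p i := by
  ext a
  refine Fin.cases ?_ (fun _ => ?_) a <;>
    simp [liftHDeriv, liftHPartial, e4, Pi.single_apply, div_eq_inv_mul]

lemma hasDerivAt_comp_liftH_line {F : Type*} [NormedAddCommGroup F] [NormedSpace ℝ F]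
    {φ : (Fin 4 → ℝ) → F} {φ' : (Fin 4 → ℝ) →L[ℝ] F} (hφ : HasFDerivAt φ φ' (liftH p))
    (i : Fin 3) :
    HasDerivAt (fun t : ℝ => φ (liftH (p + t • Pi.single i 1))) (φ' (liftHPartial p i)) 0 := by
  rw [← liftHDeriv_single]
  exact (hφ.comp p (hasFDerivAt_liftH p)).hasLineDerivAt (Pi.single i 1)

end Chart

def lowCLM (b : Fin 4) : (Fin 4 → ℝ) →L[ℝ] ℝ :=
  if b = 0 then ContinuousLinearMap.proj 0 else -ContinuousLinearMap.proj b

@[simp] lemma lowCLM_apply (b : Fin 4) (x : Fin 4 → ℝ) : lowCLM b x = low b x := by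
  unfold lowCLM low
  split_ifs <;> simp

def tangentField (f : (Fin 4 → ℝ) → ℝ) (b : Fin 4) (i : Fin 3) (p : Fin 3 → ℝ) : ℝ :=
  (e4 b i.succ - low b (liftH p) * p i) * f (liftH p) / liftH p 0

section TangentField

variable {f : (Fin 4 → ℝ) → ℝ}

lemma differentiable_tangentField (hf : Differentiable ℝ f) (b : Fin 4) (i : Fin 3) :
    Differentiable ℝ (tangentField f b i) := by
  have hl : Differentiable ℝ liftH := fun p => (hasFDerivAt_liftH p).differentiableAt
  have hlow : Differentiable ℝ fun q => low b (liftH q) := by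
    simpa [Function.comp_def] using (lowCLM b).differentiable.comp hl
  have h0 : Differentiable ℝ fun q => liftH q 0 := by fun_prop
  have hfl : Differentiable ℝ fun q => f (liftH q) := by fun_prop
  have hi : Differentiable ℝ fun q : Fin 3 → ℝ => q i := by fun_prop
  have h := (((differentiable_const (e4 b i.succ)).fun_sub (hlow.fun_mul hi)).fun_mul hfl).fun_mul
    (h0.fun_inv fun q => (liftH_zero_pos q).ne')
  simp only [← div_eq_mul_inv] at h
  exact h

lemma fderiv_tangentField_single (hf : Differentiable ℝ f) (b : Fin 4) (i : Fin 3)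
    (p : Fin 3 → ℝ) :
    fderiv ℝ (tangentField f b i) p (Pi.single i 1) =
      ((-(low b (liftHPartial p i) * p i + low b (liftH p)) * f (liftH p)
          + (e4 b i.succ - low b (liftH p) * p i) * fderiv ℝ f (liftH p) (liftHPartial p i))
          * liftH p 0
        - (e4 b i.succ - low b (liftH p) * p i) * f (liftH p) * (p i / liftH p 0))
        / liftH p 0 ^ 2 := by
  rw [← (differentiable_tangentField hf b i p).lineDeriv_eq_fderiv]
  have hw := hasDerivAt_comp_liftH_line p (lowCLM b).hasFDerivAt i
  have hg := hasDerivAt_comp_liftH_line p (hf (liftH p)).hasFDerivAt i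
  have ht := hasDerivAt_comp_liftH_line p
    (ContinuousLinearMap.proj 0 : (Fin 4 → ℝ) →L[ℝ] ℝ).hasFDerivAt i
  have hq : HasDerivAt (fun t : ℝ => (p + t • (Pi.single i 1 : Fin 3 → ℝ)) i) 1 0 := by
    simpa using (hasDerivAt_id (0 : ℝ)).const_add (p i)
  have h := (((hasDerivAt_const (0 : ℝ) (e4 b i.succ)).fun_sub (hw.fun_mul hq)).fun_mul hg).fun_div
    ht (by simpa using (liftH_zero_pos p).ne')
  simp only [lowCLM_apply, ContinuousLinearMap.proj_apply, zero_smul, add_zero] at h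
  refine HasLineDerivAt.lineDeriv (h.congr_deriv ?_)
  simp [liftHPartial, e4]

lemma clm_apply_eq_sum_e4 (L : (Fin 4 → ℝ) →L[ℝ] ℝ) (x : Fin 4 → ℝ) :
    L x = ∑ a, x a * L (e4 a) := by
  conv_lhs => rw [pi_eq_sum_univ' x]
  simp [map_sum, e4]

lemma sum_fderiv_tangentField (hf : Differentiable ℝ f) (b : Fin 4) (p : Fin 3 → ℝ) :
    ∑ i, fderiv ℝ (tangentField f b i) p (Pi.single i 1) =
      (dHp b f (liftH p) - 3 * low b (liftH p) * f (liftH p)) / liftH p 0 := by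
  have ht := (liftH_zero_pos p).ne'
  have hsq := liftH_zero_sq p
  simp only [fderiv_tangentField_single hf, dHp, mSq_liftH, clm_apply_eq_sum_e4 _ (liftH p),
    clm_apply_eq_sum_e4 _ (liftHPartial p _), Fin.sum_univ_three, Fin.sum_univ_four]
  set L := fderiv ℝ f (liftH p)
  fin_cases b <;> simp [low, liftHPartial, e4, liftH_one, liftH_two, liftH_three] <;> field_simp
  · linear_combination liftH p 0 * L (Pi.single 0 1) * hsq
  · linear_combination p 0 * (f (liftH p) - liftH p 0 * L (Pi.single 0 1)) * hsq
  · linear_combination p 1 * (f (liftH p) - liftH p 0 * L (Pi.single 0 1)) * hsq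
  · linear_combination p 2 * (f (liftH p) - liftH p 0 * L (Pi.single 0 1)) * hsq

lemma abs_e4_sub_low_mul_le (b : Fin 4) (i : Fin 3) (p : Fin 3 → ℝ) :
    |e4 b i.succ - low b (liftH p) * p i| ≤ liftH p 0 ^ 2 := by
  have hpi : |p i| ≤ ‖p‖ := norm_le_pi_norm p i
  induction b using Fin.cases with
  | zero =>
    have ht := liftH_zero_pos p
    rw [e4, Pi.single_eq_of_ne (Fin.succ_ne_zero i), low, if_pos rfl, zero_sub, abs_neg,
      abs_mul, abs_of_pos ht, sq]
    exact mul_le_mul_of_nonneg_left (hpi.trans (norm_le_liftH_zero p)) ht.le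
  | succ j =>
    have hlow : low j.succ (liftH p) = -p j := by
      rw [low, if_neg (Fin.succ_ne_zero j)]
      fin_cases j <;> rfl
    have he : |e4 j.succ i.succ| ≤ 1 := by
      rw [e4, Pi.single_apply]
      split_ifs <;> simp
    have hpj : |p j| ≤ ‖p‖ := norm_le_pi_norm p j
    rw [hlow, neg_mul, sub_neg_eq_add]
    calc _ ≤ 1 + |p j| * |p i| := (abs_add_le _ _).trans (by rw [abs_mul]; linarith)
      _ ≤ 1 + ‖p‖ ^ 2 := by nlinarith [abs_nonneg (p i), abs_nonneg (p j)]
      _ ≤ _ := by linarith [sq_norm_add_one_le p]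

lemma norm_sq_mul_norm_tangentField_le (b : Fin 4) (i : Fin 3) (p : Fin 3 → ℝ) :
    ‖p‖ ^ 2 * ‖tangentField f b i p‖ ≤ |f (liftH p)| * liftH p 0 ^ 3 := by
  have ht := liftH_zero_pos p
  have hF : ‖tangentField f b i p‖ ≤ liftH p 0 * |f (liftH p)| := by
    rw [Real.norm_eq_abs, tangentField, abs_div, abs_mul, abs_of_pos ht, div_le_iff₀ ht]
    calc _ ≤ liftH p 0 ^ 2 * |f (liftH p)| :=
          mul_le_mul_of_nonneg_right (abs_e4_sub_low_mul_le b i p) (abs_nonneg _)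
      _ = _ := by ring
  calc _ ≤ liftH p 0 ^ 2 * (liftH p 0 * |f (liftH p)|) :=
        mul_le_mul (pow_le_pow_left₀ (norm_nonneg p) (norm_le_liftH_zero p) 2) hF
          (norm_nonneg _) (by positivity)
    _ = _ := by ring

end TangentField

/-- for a `C¹` function `f` decaying as `o((v⁰)⁻³)` on `H₊` (with enough decay
for the integral to converge, expressed as an integrability hypothesis),
`∫_{H₊} (δ_b f − 3 v_b f) dμ = 0`, where in the parametrization `v = liftH p` the invariant
measure is `dμ = d³p/v⁰`. -/
theorem stmt8 (f : (Fin 4 → ℝ) → ℝ) (hf : ContDiff ℝ 1 f)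
    (hdec : ∀ ε > (0:ℝ), ∃ M : ℝ, ∀ p : Fin 3 → ℝ, M ≤ ‖p‖ →
      |f (liftH p)| * (liftH p 0)^3 ≤ ε)
    (b : Fin 4)
    (hi : Integrable (fun p : Fin 3 → ℝ =>
      (dHp b f (liftH p) - 3 * low b (liftH p) * f (liftH p)) / liftH p 0)) :
    ∫ p : Fin 3 → ℝ,
      (dHp b f (liftH p) - 3 * low b (liftH p) * f (liftH p)) / liftH p 0 = 0 := by
  have hdiff : Differentiable ℝ f := hf.differentiable one_ne_zero
  have hdecay : Tendsto (fun p => |f (liftH p)| * liftH p 0 ^ 3) (cobounded _) (𝓝 0) := by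
    refine (hasBasis_cobounded_norm.tendsto_iff Metric.nhds_basis_closedBall).2 fun ε hε => ?_
    obtain ⟨M, hM⟩ := hdec ε hε
    refine ⟨M, trivial, fun p hp => ?_⟩
    have ht := liftH_zero_pos p
    rw [mem_closedBall, dist_zero_right, Real.norm_of_nonneg (by positivity)]
    exact hM p hp
  simp only [← sum_fderiv_tangentField hdiff b] at hi ⊢
  exact integral_divergence_eq_zero_of_decay
    (fun i p => (differentiable_tangentField hdiff b i p).hasFDerivAt) hi fun i =>
      squeeze_zero (fun p => by positivity) (norm_sq_mul_norm_tangentField_le b i) hdecay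
end
end

section
/- Fix a unit future timelike vector v and a constant e. Define, for spacelike x (x² < 0), F(x) = (v·x/√((v·x)² − x²)) · artanh(v·x/√((v·x)² − x²)). Then F is smooth on {x² < 0} and satisfies the wave equation with source: □F(x) = −2/x², where □ = ∂²/∂(x⁰)² − Δ_{x⃗} is the d'Alembertian. -/
set_option maxHeartbeats 2000000
noncomputable section
open MeasureTheory Real Filter Topology

/-- Second partial derivative in direction `a`. -/
def d2 (f : (Fin 4 → ℝ) → ℝ) (a : Fin 4) (x : Fin 4 → ℝ) : ℝ :=
  fderiv ℝ (fun y => fderiv ℝ f y (e4 a)) x (e4 a)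

/-- Inverse hyperbolic tangent, `artanh t = (1/2)·log((1+t)/(1−t))`. -/
def artanh (t : ℝ) : ℝ := (1/2) * Real.log ((1 + t) / (1 - t))

/-- The ratio `v·x/√((v·x)² − x²)`, lying in `(−1,1)` for spacelike `x`. -/
def ratio (v x : Fin 4 → ℝ) : ℝ := mdot v x / Real.sqrt ((mdot v x)^2 - mSq x)


def mlin (v : Fin 4 → ℝ) : (Fin 4 → ℝ) →L[ℝ] ℝ :=
  v 0 • ContinuousLinearMap.proj 0 - v 1 • ContinuousLinearMap.proj 1
    - v 2 • ContinuousLinearMap.proj 2 - v 3 • ContinuousLinearMap.proj 3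

@[simp] lemma mlin_apply (v w : Fin 4 → ℝ) : mlin v w = mdot v w := by
  simp [mlin, mdot]

lemma hasFDerivAt_coord (x : Fin 4 → ℝ) (i : Fin 4) :
    HasFDerivAt (fun y : Fin 4 → ℝ => y i) (ContinuousLinearMap.proj i : (Fin 4 → ℝ) →L[ℝ] ℝ) x :=
  (ContinuousLinearMap.proj i : (Fin 4 → ℝ) →L[ℝ] ℝ).hasFDerivAt

lemma hasFDerivAt_mdot (v x : Fin 4 → ℝ) : HasFDerivAt (fun y => mdot v y) (mlin v) x := by
  have h : (fun y : Fin 4 → ℝ => mdot v y) = ⇑(mlin v) := by funext y; simp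
  rw [h]; exact (mlin v).hasFDerivAt

lemma hasFDerivAt_mSq (x : Fin 4 → ℝ) : HasFDerivAt mSq ((2:ℝ) • mlin x) x := by
  have h := hasFDerivAt_coord x
  refine (((((h 0).mul (h 0)).sub ((h 1).mul (h 1))).sub ((h 2).mul (h 2))).sub
    ((h 3).mul (h 3))).congr_fderiv ?_ |>.congr_of_eventuallyEq ?_
  · ext w; simp [mlin]; ring
  · filter_upwards with y; simp [mSq, mdot]

lemma hasDerivAt_artanh {t : ℝ} (h1 : -1 < t) (h2 : t < 1) :
    HasDerivAt _root_.artanh (1 / (1 - t^2)) t := by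
  have hp : (0:ℝ) < 1 + t := by linarith
  have hm : (0:ℝ) < 1 - t := by linarith
  have hsq : (1:ℝ) - t^2 ≠ 0 := by nlinarith
  have hnum : HasDerivAt (fun s : ℝ => 1 + s) 1 t := (hasDerivAt_id t).const_add 1
  have hden : HasDerivAt (fun s : ℝ => 1 - s) (-1) t := by
    simpa using (hasDerivAt_id t).const_sub 1
  have hl := ((hnum.div hden (ne_of_gt hm)).log (div_pos hp hm).ne').const_mul (1/2 : ℝ)
  refine hl.congr_deriv ?_
  simp only [Pi.div_apply]
  field_simp
  ring

/-- `√((v·x)² − x²)`. -/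
def Qf (v x : Fin 4 → ℝ) : ℝ := Real.sqrt ((mdot v x)^2 - mSq x)

def Tf (v x : Fin 4 → ℝ) : ℝ := _root_.artanh (ratio v x)

def Gu (v x : Fin 4 → ℝ) : ℝ :=
  -(mSq x) * Tf v x / (Qf v x)^3 + mdot v x / ((mdot v x)^2 - mSq x)

def Gs2 (v x : Fin 4 → ℝ) : ℝ :=
  mdot v x * Tf v x / (Qf v x)^3 - (mdot v x)^2 / (mSq x * ((mdot v x)^2 - mSq x))

section pt
variable (v : Fin 4 → ℝ) {x : Fin 4 → ℝ}

lemma hD_pos (hx : mSq x < 0) : 0 < (mdot v x)^2 - mSq x := by nlinarith [sq_nonneg (mdot v x)]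

lemma hQ_pos (hx : mSq x < 0) : 0 < Qf v x := Real.sqrt_pos.2 (hD_pos v hx)

lemma hQ_sq (hx : mSq x < 0) : (Qf v x)^2 = (mdot v x)^2 - mSq x := Real.sq_sqrt (hD_pos v hx).le

lemma hmSq_eq (hx : mSq x < 0) : mSq x = (mdot v x)^2 - (Qf v x)^2 := by
  have := hQ_sq v hx; linarith

lemma hr_lt (hx : mSq x < 0) : -1 < mdot v x * (Qf v x)⁻¹ ∧ mdot v x * (Qf v x)⁻¹ < 1 := by
  have hq := hQ_pos v hx
  have h2 := hQ_sq v hx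
  have hu2 : (mdot v x)^2 < (Qf v x)^2 := by nlinarith
  have h3 : |mdot v x| < |Qf v x| := by
    rw [← Real.sqrt_sq_eq_abs, ← Real.sqrt_sq_eq_abs]
    exact Real.sqrt_lt_sqrt (sq_nonneg _) hu2
  rw [abs_of_pos hq] at h3
  rw [abs_lt] at h3
  constructor
  · rw [neg_lt, ← neg_mul]
    calc -(mdot v x) * (Qf v x)⁻¹ < Qf v x * (Qf v x)⁻¹ := by
          apply mul_lt_mul_of_pos_right (by linarith) (by positivity)
      _ = 1 := mul_inv_cancel₀ (ne_of_gt hq)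
  · calc mdot v x * (Qf v x)⁻¹ < Qf v x * (Qf v x)⁻¹ :=
          mul_lt_mul_of_pos_right h3.2 (by positivity)
      _ = 1 := mul_inv_cancel₀ (ne_of_gt hq)

lemma first_deriv (hx : mSq x < 0) :
    HasFDerivAt (fun y => ratio v y * _root_.artanh (ratio v y))
      (Gu v x • mlin v + Gs2 v x • mlin x) x := by
  have hq := hQ_pos v hx
  have hq2 := hQ_sq v hx
  have hD := hD_pos v hx
  have hU := hasFDerivAt_mdot v x
  have hS := hasFDerivAt_mSq x
  have hE : HasFDerivAt (fun y => (mdot v y)^2 - mSq y)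
      ((mdot v x • mlin v + mdot v x • mlin v) - (2:ℝ) • mlin x) x := by
    have h := (hU.mul hU).sub hS
    refine h.congr_of_eventuallyEq ?_
    filter_upwards with y; simp [sq]
  have hQ : HasFDerivAt (fun y => Qf v y)
      ((1 / (2 * Real.sqrt ((mdot v x)^2 - mSq x))) •
        ((mdot v x • mlin v + mdot v x • mlin v) - (2:ℝ) • mlin x)) x :=
    hE.sqrt (ne_of_gt hD)
  have hQx : Qf v x ≠ 0 := ne_of_gt hq
  have hQinv := (hasDerivAt_inv hQx).comp_hasFDerivAt x hQ
  have hR := hU.mul hQinv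
  have hrb := hr_lt v hx
  have hT0 := hasDerivAt_artanh hrb.1 hrb.2
  have hT := hT0.comp_hasFDerivAt x hR
  have hF := hR.mul hT
  have hfun : (fun y => ratio v y * _root_.artanh (ratio v y))
      = fun y => (mdot v y * (Qf v y)⁻¹) * _root_.artanh (mdot v y * (Qf v y)⁻¹) := by
    funext y; rw [ratio, div_eq_mul_inv]; rfl
  rw [hfun]
  refine hF.congr_fderiv ?_
  have hr2 : 1 - (mdot v x * (Qf v x)⁻¹)^2 ≠ 0 := by
    have := hrb.1; have := hrb.2; nlinarith [sq_nonneg (mdot v x * (Qf v x)⁻¹)]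
  have hs0 : mSq x ≠ 0 := ne_of_lt hx
  ext w
  simp only [ContinuousLinearMap.add_apply, ContinuousLinearMap.smul_apply,
    ContinuousLinearMap.coe_sub', Pi.sub_apply, ContinuousLinearMap.coe_smul', Pi.smul_apply,
    mlin_apply, ContinuousLinearMap.comp_apply, smul_eq_mul]
  simp only [Function.comp_apply, Pi.mul_apply, Pi.pow_apply, Pi.add_apply, Pi.neg_apply]
  have h1 : √((mdot v x)^2 - mSq x) = Qf v x := rfl
  rw [h1]
  have h2 : ratio v x = mdot v x * (Qf v x)⁻¹ := by rw [ratio, div_eq_mul_inv]; rfl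
  simp only [Gu, Gs2, Tf, h2, div_eq_mul_inv]
  rw [hmSq_eq v hx]
  set u := mdot v x with hu
  set q := Qf v x with hqd
  set a := mdot v w with ha
  set b := mdot x w with hb
  set T := _root_.artanh (u * q⁻¹) with hT1
  have hr3 : q^2 - u^2 ≠ 0 := by
    have : q^2 - u^2 = -mSq x := by rw [hq2]; ring
    rw [this]; exact neg_ne_zero.mpr hs0
  have h5 : 1 - (u*q⁻¹)^2 = (q^2-u^2)/q^2 := by field_simp
  have hkey : (1-(u*q⁻¹)^2)⁻¹ = q^2/(q^2-u^2) := by rw [h5, inv_div]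
  have hr4 : u^2 - q^2 ≠ 0 := fun h => hr3 (by linarith [sub_eq_zero.mp h])
  rw [hkey]
  have h6 : -u^2 + q^2 ≠ 0 := by intro h; exact hr3 (by linarith)
  have h7 : -(u^2*q^4) + q^6 ≠ 0 := by
    have : -(u^2*q^4) + q^6 = (-u^2+q^2)*q^4 := by ring
    rw [this]; positivity
  have h8 : u^2*q^2 - q^4 ≠ 0 := by
    have : u^2*q^2 - q^4 = (u^2-q^2)*q^2 := by ring
    rw [this]; positivity
  ring_nf
  field_simp [h6, h7, h8]
  ring
end pt

section pt2
variable (v : Fin 4 → ℝ) {x : Fin 4 → ℝ}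

lemma Gu_deriv (hx : mSq x < 0) :
    HasFDerivAt (fun y => Gu v y)
      ((((-2*mSq x - (mdot v x)^2)/(Qf v x)^4 + 3*mdot v x*mSq x*Tf v x/(Qf v x)^5) • mlin v
        + ((-2*Tf v x)/(Qf v x)^3 - 3*mSq x*Tf v x/(Qf v x)^5 + 3*mdot v x/(Qf v x)^4) • mlin x)) x := by
  have hq := hQ_pos v hx
  have hq2 := hQ_sq v hx
  have hD := hD_pos v hx
  have hs0 : mSq x ≠ 0 := ne_of_lt hx
  have hU := hasFDerivAt_mdot v x
  have hS := hasFDerivAt_mSq x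
  have hE : HasFDerivAt (fun y => (mdot v y)^2 - mSq y)
      ((mdot v x • mlin v + mdot v x • mlin v) - (2:ℝ) • mlin x) x := by
    refine ((hU.mul hU).sub hS).congr_of_eventuallyEq ?_
    filter_upwards with y; simp [sq]
  have hQ : HasFDerivAt (fun y => Qf v y)
      ((1 / (2 * Real.sqrt ((mdot v x)^2 - mSq x))) •
        ((mdot v x • mlin v + mdot v x • mlin v) - (2:ℝ) • mlin x)) x :=
    hE.sqrt (ne_of_gt hD)
  have hQx : Qf v x ≠ 0 := ne_of_gt hq
  have hQinv := (hasDerivAt_inv hQx).comp_hasFDerivAt x hQ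
  have hR := hU.mul hQinv
  have hrb := hr_lt v hx
  have hT := (hasDerivAt_artanh hrb.1 hrb.2).comp_hasFDerivAt x hR
  have hQ3 := (hQ.mul hQ).mul hQ
  have hQ3x : Qf v x * Qf v x * Qf v x ≠ 0 := by positivity
  have hQ3inv := (hasDerivAt_inv hQ3x).comp_hasFDerivAt x hQ3
  have hEinv := (hasDerivAt_inv (ne_of_gt hD)).comp_hasFDerivAt x hE
  have hmain := ((hS.neg.mul hT).mul hQ3inv).add (hU.mul hEinv)
  refine (hmain.congr_fderiv ?_).congr_of_eventuallyEq ?_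
  · ext w
    simp only [ContinuousLinearMap.add_apply, ContinuousLinearMap.smul_apply,
      ContinuousLinearMap.coe_sub', Pi.sub_apply, ContinuousLinearMap.coe_smul', Pi.smul_apply,
      mlin_apply, ContinuousLinearMap.comp_apply, smul_eq_mul, Function.comp_apply,
      ContinuousLinearMap.neg_apply, Pi.neg_apply, Pi.mul_apply, Pi.pow_apply, Pi.add_apply]
    have h1 : √((mdot v x)^2 - mSq x) = Qf v x := rfl
    have h2 : ratio v x = mdot v x * (Qf v x)⁻¹ := by rw [ratio, div_eq_mul_inv]; rfl
    rw [h1]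
    simp only [Tf, h2, div_eq_mul_inv]
    rw [hmSq_eq v hx]
    set u := mdot v x with hu
    set q := Qf v x with hqd
    set a := mdot v w with ha
    set b := mdot x w with hb
    set T := _root_.artanh (u * q⁻¹) with hT1
    have hr3 : q^2 - u^2 ≠ 0 := by
      have : q^2 - u^2 = -mSq x := by rw [hq2]; ring
      rw [this]; exact neg_ne_zero.mpr hs0
    have h5 : 1 - (u*q⁻¹)^2 = (q^2-u^2)/q^2 := by field_simp
    have hkey : (1-(u*q⁻¹)^2)⁻¹ = q^2/(q^2-u^2) := by rw [h5, inv_div]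
    rw [hkey]
    have h6 : -u^2 + q^2 ≠ 0 := by intro h; exact hr3 (by linarith)
    ring_nf
    field_simp [h6]
    ring
  · filter_upwards with y
    simp only [Gu, Tf, div_eq_mul_inv, Function.comp_apply, Pi.mul_apply, Pi.pow_apply,
      Pi.add_apply, Pi.neg_apply, Pi.sub_apply]
    have : ratio v y = mdot v y * (Qf v y)⁻¹ := by rw [ratio, div_eq_mul_inv]; rfl
    rw [this]
    ring_nf

lemma Gs2_deriv (v : Fin 4 → ℝ) {x : Fin 4 → ℝ} (hx : mSq x < 0) :
    HasFDerivAt (fun y => Gs2 v y)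
      ((((-2*Tf v x)/(Qf v x)^3 - 3*mSq x*Tf v x/(Qf v x)^5 + 3*mdot v x/(Qf v x)^4) • mlin v
        + (-(mdot v x)^2/(mSq x*(Qf v x)^4) + 3*mdot v x*Tf v x/(Qf v x)^5
            + 2*(mdot v x)^2*((Qf v x)^2 - mSq x)/((mSq x)^2*(Qf v x)^4)) • mlin x)) x := by
  have hq := hQ_pos v hx
  have hq2 := hQ_sq v hx
  have hD := hD_pos v hx
  have hs0 : mSq x ≠ 0 := ne_of_lt hx
  have hU := hasFDerivAt_mdot v x
  have hS := hasFDerivAt_mSq x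
  have hE : HasFDerivAt (fun y => (mdot v y)^2 - mSq y)
      ((mdot v x • mlin v + mdot v x • mlin v) - (2:ℝ) • mlin x) x := by
    refine ((hU.mul hU).sub hS).congr_of_eventuallyEq ?_
    filter_upwards with y; simp [sq]
  have hQ : HasFDerivAt (fun y => Qf v y)
      ((1 / (2 * Real.sqrt ((mdot v x)^2 - mSq x))) •
        ((mdot v x • mlin v + mdot v x • mlin v) - (2:ℝ) • mlin x)) x :=
    hE.sqrt (ne_of_gt hD)
  have hQx : Qf v x ≠ 0 := ne_of_gt hq
  have hQinv := (hasDerivAt_inv hQx).comp_hasFDerivAt x hQ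
  have hR := hU.mul hQinv
  have hrb := hr_lt v hx
  have hT := (hasDerivAt_artanh hrb.1 hrb.2).comp_hasFDerivAt x hR
  have hQ3 := (hQ.mul hQ).mul hQ
  have hQ3x : Qf v x * Qf v x * Qf v x ≠ 0 := by positivity
  have hQ3inv := (hasDerivAt_inv hQ3x).comp_hasFDerivAt x hQ3
  have hSE := hS.mul hE
  have hSEx : mSq x * ((mdot v x)^2 - mSq x) ≠ 0 := mul_ne_zero hs0 (ne_of_gt hD)
  have hSEinv := (hasDerivAt_inv hSEx).comp_hasFDerivAt x hSE
  have hmain := ((hU.mul hT).mul hQ3inv).sub ((hU.mul hU).mul hSEinv)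
  refine (hmain.congr_fderiv ?_).congr_of_eventuallyEq ?_
  · ext w
    simp only [ContinuousLinearMap.add_apply, ContinuousLinearMap.smul_apply,
      ContinuousLinearMap.coe_sub', Pi.sub_apply, ContinuousLinearMap.coe_smul', Pi.smul_apply,
      mlin_apply, ContinuousLinearMap.comp_apply, smul_eq_mul, Function.comp_apply,
      ContinuousLinearMap.neg_apply, Pi.neg_apply, Pi.mul_apply, Pi.pow_apply, Pi.add_apply]
    have h1 : √((mdot v x)^2 - mSq x) = Qf v x := rfl
    have h2 : ratio v x = mdot v x * (Qf v x)⁻¹ := by rw [ratio, div_eq_mul_inv]; rfl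
    rw [h1]
    simp only [Tf, h2, div_eq_mul_inv]
    rw [hmSq_eq v hx]
    set u := mdot v x with hu
    set q := Qf v x with hqd
    set a := mdot v w with ha
    set b := mdot x w with hb
    set T := _root_.artanh (u * q⁻¹) with hT1
    have hr3 : q^2 - u^2 ≠ 0 := by
      have : q^2 - u^2 = -mSq x := by rw [hq2]; ring
      rw [this]; exact neg_ne_zero.mpr hs0
    have h5 : 1 - (u*q⁻¹)^2 = (q^2-u^2)/q^2 := by field_simp
    have hkey : (1-(u*q⁻¹)^2)⁻¹ = q^2/(q^2-u^2) := by rw [h5, inv_div]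
    rw [hkey]
    have h6 : -u^2 + q^2 ≠ 0 := by intro h; exact hr3 (by linarith)
    have hr4 : u^2 - q^2 ≠ 0 := fun h => hr3 (by linarith [sub_eq_zero.mp h])
    have h8 : u^2*q^2 - q^4 ≠ 0 := by
      have : u^2*q^2 - q^4 = (u^2-q^2)*q^2 := by ring
      rw [this]; positivity
    have h9 : -(u^2*q^6*2) + u^4*q^4 + q^8 ≠ 0 := by
      have : -(u^2*q^6*2) + u^4*q^4 + q^8 = (u^2-q^2)^2*q^4 := by ring
      rw [this]; positivity
    have h10 : u^2*q^4 - q^6 ≠ 0 := by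
      have : u^2*q^4 - q^6 = (u^2-q^2)*q^4 := by ring
      rw [this]; positivity
    have h11 : -(u^2*q^2*2) + u^4 + q^4 ≠ 0 := by
      have : -(u^2*q^2*2) + u^4 + q^4 = (u^2-q^2)^2 := by ring
      rw [this]; positivity
    ring_nf
    field_simp [h6, hr4, h8, h9, h10, h11]
    have hED : (-(u^2*q^2*2) + u^4 + q^4)⁻¹ * (-(u^2*q^2*2) + u^4 + q^4) = 1 := inv_mul_cancel₀ h11
    linear_combination (-2*u^3*a*q*(u^2-q^2)) * hED
  · filter_upwards with y
    simp only [Gs2, Tf, div_eq_mul_inv, Function.comp_apply, Pi.mul_apply, Pi.pow_apply,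
      Pi.add_apply, Pi.neg_apply, Pi.sub_apply]
    have : ratio v y = mdot v y * (Qf v y)⁻¹ := by rw [ratio, div_eq_mul_inv]; rfl
    rw [this]
    ring_nf

end pt2

lemma mdot_symm (a b : Fin 4 → ℝ) : mdot a b = mdot b a := by simp [mdot]; ring

lemma contDiff_mdot (v : Fin 4 → ℝ) : ContDiff ℝ (⊤ : ℕ∞) (fun y => mdot v y) := by
  have h : (fun y : Fin 4 → ℝ => mdot v y) = ⇑(mlin v) := by funext y; simp
  rw [h]; exact (mlin v).contDiff

lemma contDiff_mSq : ContDiff ℝ (⊤ : ℕ∞) mSq := by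
  have hcoord : ∀ i : Fin 4, ContDiff ℝ (⊤ : ℕ∞) (fun y : Fin 4 → ℝ => y i) := fun i =>
    (ContinuousLinearMap.proj i : (Fin 4 → ℝ) →L[ℝ] ℝ).contDiff
  have h : mSq = fun y : Fin 4 → ℝ => y 0 * y 0 - y 1 * y 1 - y 2 * y 2 - y 3 * y 3 := by
    funext y; simp [mSq, mdot]
  rw [h]
  exact ((((hcoord 0).mul (hcoord 0)).sub ((hcoord 1).mul (hcoord 1))).sub
    ((hcoord 2).mul (hcoord 2))).sub ((hcoord 3).mul (hcoord 3))

lemma smooth_part (v : Fin 4 → ℝ) :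
    ContDiffOn ℝ (⊤ : ℕ∞) (fun x => ratio v x * _root_.artanh (ratio v x)) {x : Fin 4 → ℝ | mSq x < 0} := by
  intro x hx
  have hx' : mSq x < 0 := hx
  have hq := hQ_pos v hx'
  have hD := hD_pos v hx'
  have hQx : Qf v x ≠ 0 := ne_of_gt hq
  have cE : ContDiffAt ℝ (⊤ : ℕ∞) (fun y => (mdot v y)^2 - mSq y) x :=
    (((contDiff_mdot v).pow 2).sub contDiff_mSq).contDiffAt
  have cQ : ContDiffAt ℝ (⊤ : ℕ∞) (fun y => Qf v y) x := cE.sqrt (ne_of_gt hD)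
  have cR : ContDiffAt ℝ (⊤ : ℕ∞) (fun y => ratio v y) x :=
    (contDiff_mdot v).contDiffAt.div cQ hQx
  have hrb := hr_lt v hx'
  have hram : ratio v x = mdot v x * (Qf v x)⁻¹ := by rw [ratio, div_eq_mul_inv]; rfl
  have h1p : (0:ℝ) < 1 + ratio v x := by rw [hram]; linarith [hrb.1]
  have h1m : (0:ℝ) < 1 - ratio v x := by rw [hram]; linarith [hrb.2]
  have cat : ContDiffAt ℝ (⊤ : ℕ∞) _root_.artanh (ratio v x) := by
    have : ContDiffAt ℝ (⊤ : ℕ∞) (fun t : ℝ => (1/2) * Real.log ((1 + t) / (1 - t)))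
        (ratio v x) := by
      refine contDiffAt_const.mul (ContDiffAt.log ?_ (by positivity))
      exact (contDiffAt_const.add contDiffAt_id).div
        (contDiffAt_const.sub contDiffAt_id) (ne_of_gt h1m)
    exact this
  exact (cR.mul (cat.comp x cR)).contDiffWithinAt

lemma isOpen_spacelike : IsOpen {x : Fin 4 → ℝ | mSq x < 0} :=
  isOpen_lt contDiff_mSq.continuous continuous_const

lemma d2_formula (v : Fin 4 → ℝ) {x : Fin 4 → ℝ} (hx : mSq x < 0) (a : Fin 4) :
    d2 (fun y => ratio v y * _root_.artanh (ratio v y)) a x =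
      mdot v (e4 a) * ((((-2*mSq x - (mdot v x)^2)/(Qf v x)^4
            + 3*mdot v x*mSq x*Tf v x/(Qf v x)^5)) * mdot v (e4 a)
          + ((-2*Tf v x)/(Qf v x)^3 - 3*mSq x*Tf v x/(Qf v x)^5
            + 3*mdot v x/(Qf v x)^4) * mdot x (e4 a))
      + (Gs2 v x * mdot (e4 a) (e4 a)
        + mdot (e4 a) x * (((-2*Tf v x)/(Qf v x)^3 - 3*mSq x*Tf v x/(Qf v x)^5
              + 3*mdot v x/(Qf v x)^4) * mdot v (e4 a)
            + (-(mdot v x)^2/(mSq x*(Qf v x)^4) + 3*mdot v x*Tf v x/(Qf v x)^5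
              + 2*(mdot v x)^2*((Qf v x)^2 - mSq x)/((mSq x)^2*(Qf v x)^4)) * mdot x (e4 a))) := by
  have hev : (fun y => fderiv ℝ (fun z => ratio v z * _root_.artanh (ratio v z)) y (e4 a))
      =ᶠ[nhds x] (fun y => Gu v y * mdot v (e4 a) + Gs2 v y * mdot (e4 a) y) := by
    filter_upwards [isOpen_spacelike.mem_nhds hx] with y hy
    rw [(first_deriv v hy).fderiv]
    simp only [ContinuousLinearMap.add_apply, ContinuousLinearMap.smul_apply, mlin_apply,
      smul_eq_mul]
    rw [mdot_symm y (e4 a)]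
  have hga := ((Gu_deriv v hx).mul_const (mdot v (e4 a))).add
    ((Gs2_deriv v hx).mul (hasFDerivAt_mdot (e4 a) x))
  rw [d2, hev.fderiv_eq,
    HasFDerivAt.fderiv (f := fun y => Gu v y * mdot v (e4 a) + Gs2 v y * mdot (e4 a) y) hga]
  simp only [ContinuousLinearMap.add_apply, ContinuousLinearMap.smul_apply, mlin_apply,
    smul_eq_mul]

lemma sum_identity (v x : Fin 4 → ℝ) (G1 G2 G3 G4 : ℝ) :
    (mdot v (e4 0) * (G1 * mdot v (e4 0) + G2 * mdot x (e4 0))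
      + (G4 * mdot (e4 0) (e4 0) + mdot (e4 0) x * (G2 * mdot v (e4 0) + G3 * mdot x (e4 0))))
    - (mdot v (e4 1) * (G1 * mdot v (e4 1) + G2 * mdot x (e4 1))
      + (G4 * mdot (e4 1) (e4 1) + mdot (e4 1) x * (G2 * mdot v (e4 1) + G3 * mdot x (e4 1))))
    - (mdot v (e4 2) * (G1 * mdot v (e4 2) + G2 * mdot x (e4 2))
      + (G4 * mdot (e4 2) (e4 2) + mdot (e4 2) x * (G2 * mdot v (e4 2) + G3 * mdot x (e4 2))))
    - (mdot v (e4 3) * (G1 * mdot v (e4 3) + G2 * mdot x (e4 3))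
      + (G4 * mdot (e4 3) (e4 3) + mdot (e4 3) x * (G2 * mdot v (e4 3) + G3 * mdot x (e4 3))))
    = G1 * mSq v + 2*G2*(mdot v x) + G3 * mSq x + 4*G4 := by
  simp [mdot, mSq, e4, Pi.single_apply]
  ring


theorem main_part2 (v : Fin 4 → ℝ) (hv : mSq v = 1) {x : Fin 4 → ℝ} (hx : mSq x < 0) :
    d2 (fun y => ratio v y * _root_.artanh (ratio v y)) 0 x
      - d2 (fun y => ratio v y * _root_.artanh (ratio v y)) 1 x
      - d2 (fun y => ratio v y * _root_.artanh (ratio v y)) 2 x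
      - d2 (fun y => ratio v y * _root_.artanh (ratio v y)) 3 x
    = -2 / mSq x := by
  rw [d2_formula v hx 0, d2_formula v hx 1, d2_formula v hx 2, d2_formula v hx 3,
    sum_identity, hv]
  have hq := hQ_pos v hx
  have hq2 := hQ_sq v hx
  have hs0 : mSq x ≠ 0 := ne_of_lt hx
  have hQx : Qf v x ≠ 0 := ne_of_gt hq
  simp only [Gs2, Tf]
  rw [hmSq_eq v hx]
  set u := mdot v x with hu
  set q := Qf v x with hqd
  set T := _root_.artanh (ratio v x) with hT1
  have hr3 : q^2 - u^2 ≠ 0 := by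
    have : q^2 - u^2 = -mSq x := by rw [hq2]; ring
    rw [this]; exact neg_ne_zero.mpr hs0
  have hr4 : u^2 - q^2 ≠ 0 := fun h => hr3 (by linarith [sub_eq_zero.mp h])
  field_simp
  ring

/-- for a unit future timelike `v`, the function
`F(x) = (v·x/√((v·x)²−x²))·_root_.artanh(v·x/√((v·x)²−x²))` is smooth on the spacelike region
`{x² < 0}` and satisfies `□F(x) = −2/x²` there. -/
theorem stmt13 (v : Fin 4 → ℝ) (hv : mSq v = 1) (hv0 : 0 < v 0) :
    ContDiffOn ℝ (⊤ : ℕ∞) (fun x => ratio v x * _root_.artanh (ratio v x)) {x : Fin 4 → ℝ | mSq x < 0} ∧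
    ∀ x : Fin 4 → ℝ, mSq x < 0 →
      d2 (fun y => ratio v y * _root_.artanh (ratio v y)) 0 x
        - d2 (fun y => ratio v y * _root_.artanh (ratio v y)) 1 x
        - d2 (fun y => ratio v y * _root_.artanh (ratio v y)) 2 x
        - d2 (fun y => ratio v y * _root_.artanh (ratio v y)) 3 x
      = -2 / mSq x := by
  refine ⟨smooth_part v, fun x hx => main_part2 v hv hx⟩
end
end
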